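/- If a closed convex cone K in a finite-dimensional Euclidean space E is strongly tangentially exposed (i.e., K and all of its lexicographic tangent cones are tangentially exposed), then K is facially dual complete: K* + F^⊥ is closed for every proper face F of K. -/

import Mathlib

/- Common definitions following "Facially Dual Complete (Nice) cones and
lexicographic tangents" by V. Roshchina and L. Tunçel. -/

open Set Filter
open scoped Pointwise

local notation "⟪" x ", " y "⟫" => @inner ℝ _ _ x y

variable {E : Type*} [NormedAddCommGroup E] [InnerProductSpace ℝ E]

/-- The tangent cone to a set `C` at `x`: the closure of the cone of feasible
directions `{d : x + ε • d ∈ C for some ε > 0}`. -/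
def TangCone (x : E) (C : Set E) : Set E :=
  closure {d : E | ∃ ε : ℝ, 0 < ε ∧ x + ε • d ∈ C}

/-- `F` is a face of the convex set `C`: a closed convex subset such that any open
segment of `C` whose interior meets `F` has both endpoints in `F`. -/
def IsFaceOf (F C : Set E) : Prop :=
  F ⊆ C ∧ Convex ℝ F ∧ IsClosed F ∧
    ∀ x ∈ F, ∀ y ∈ C, ∀ z ∈ C, x ∈ openSegment ℝ y z → y ∈ F ∧ z ∈ F

/-- A proper face: a nonempty face different from the whole set. -/
def IsProperFaceOf (F C : Set E) : Prop := IsFaceOf F C ∧ F.Nonempty ∧ F ≠ C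

/-- The dual cone `K* = {s : ⟨s,x⟩ ≥ 0 for all x ∈ K}`. -/
def DualCone' (K : Set E) : Set E := {s : E | ∀ x ∈ K, 0 ≤ ⟪s, x⟫}

/-- `F^⊥ = {s : ⟨s,x⟩ = 0 for all x ∈ F}`. -/
def PerpOf (F : Set E) : Set E := {s : E | ∀ x ∈ F, ⟪s, x⟫ = 0}

/-- Facial dual completeness: `K* + F^⊥` is closed for every proper face `F` of `K`. -/
def IsFDC (K : Set E) : Prop :=
  ∀ F : Set E, IsProperFaceOf F K → IsClosed (DualCone' K + PerpOf F)

/-- Tangential exposure: `T(x;C) ∩ span F = T(x;F)` for every proper face `F` and `x ∈ F`. -/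
def TangentiallyExposed (C : Set E) : Prop :=
  ∀ F : Set E, IsProperFaceOf F C → ∀ x ∈ F,
    TangCone x C ∩ (Submodule.span ℝ F : Set E) = TangCone x F

/-- The family of all tangent cones of members of a family of sets. -/
def TangFamily (𝒦 : Set (Set E)) : Set (Set E) :=
  {T | ∃ C ∈ 𝒦, ∃ x ∈ C, T = TangCone x C}

/-- `𝒯^k(C)`: the `k`-fold iterated tangent-cone families of `C`;
its members are the lexicographic tangent cones (of order `k`) of `C`. -/
def TangIter (C : Set E) : ℕ → Set (Set E)
  | 0 => {C}
  | k + 1 => TangFamily (TangIter C k)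

/-- Strong tangential exposure: `C` and all of its lexicographic tangent cones are
tangentially exposed. -/
def StronglyTangentiallyExposed (C : Set E) : Prop :=
  ∀ k : ℕ, ∀ T ∈ TangIter C k, TangentiallyExposed T

/-- `F` is an exposed face of `C`: the set of maximizers over `C` of some linear functional. -/
def IsExposedFaceOf (F C : Set E) : Prop :=
  ∃ p : E, F = {x ∈ C | ∀ y ∈ C, ⟪p, y⟫ ≤ ⟪p, x⟫}

/-- `C` is facially exposed: every proper face of `C` is exposed. -/
def FaciallyExposed (C : Set E) : Prop :=
  ∀ F : Set E, IsProperFaceOf F C → IsExposedFaceOf F C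

/-- The normal cone to `C` at `x`. -/
def NormalCone' (x : E) (C : Set E) : Set E := {s : E | ∀ y ∈ C, ⟪s, y - x⟫ ≤ 0}

/-- The minimal face of `C` containing `S`. -/
def MinimalFace (S C : Set E) : Set E := ⋂₀ {F : Set E | IsFaceOf F C ∧ S ⊆ F}

/-- `K` is a cone: closed under positive scalar multiplication. -/
def IsConeSet (K : Set E) : Prop := ∀ c : ℝ, 0 < c → ∀ x ∈ K, c • x ∈ K

/-!
Let `F` be a proper face of `K` and `L = span F`. Then `K ∩ L = F` and `F^⊥ = L^⊥`, so it is
enough to show that every `s ∈ (K ∩ L)*` lies in `K* + L^⊥`.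

If `s` vanishes on `K ∩ L` only along lineality directions of `K ∩ L`, then `s` is a relative
interior point of `(K ∩ L)* = closure (K* + L^⊥)`, and a convex set contains the relative
interior of its closure. Otherwise pick `x ∈ K ∩ L` with `⟪s, x⟫ = 0` and `-x ∉ K`, and replace
`K` by `T(x; K)`: this cone is again strongly tangentially exposed, has a smaller dual and a
strictly larger lineality space, and `s` stays nonnegative on `T(x; K) ∩ L`. The last point is
where tangential exposure enters: passing to the face of `K` exposed by a functional supporting
`K` at a relative interior point of `K ∩ L` does not change `T(x; ·) ∩ L`, and once `L` meets
the relative interior of the face, `T(x; ·) ∩ L` is the closure of the feasible directions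
lying in `L`, on which `s` is nonnegative. Induction on the dimensions concludes.
-/

open Topology

structure IsClosedConvexCone (Q : Set E) : Prop where
  isClosed : IsClosed Q
  convex : Convex ℝ Q
  isCone : IsConeSet Q
  zero_mem : (0 : E) ∈ Q

namespace IsClosedConvexCone

variable {Q P : Set E} {x y : E}

lemma smul_mem (hQ : IsClosedConvexCone Q) {c : ℝ} (hc : 0 ≤ c) (hx : x ∈ Q) : c • x ∈ Q := by
  rcases hc.eq_or_lt with rfl | hc
  · simpa using hQ.zero_mem
  · exact hQ.isCone c hc x hx

lemma add_mem (hQ : IsClosedConvexCone Q) (hx : x ∈ Q) (hy : y ∈ Q) : x + y ∈ Q := by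
  have hmid := hQ.convex hx hy (by norm_num : (0 : ℝ) ≤ 1 / 2) (by norm_num : (0 : ℝ) ≤ 1 / 2)
    (by norm_num)
  convert hQ.smul_mem zero_le_two hmid using 1
  module

noncomputable def toPointedCone (hQ : IsClosedConvexCone Q) : PointedCone ℝ E where
  carrier := Q
  add_mem' := hQ.add_mem
  zero_mem' := hQ.zero_mem
  smul_mem' c _ hx := hQ.smul_mem c.2 hx

noncomputable def toProperCone (hQ : IsClosedConvexCone Q) : ProperCone ℝ E :=
  ⟨hQ.toPointedCone, hQ.isClosed⟩

noncomputable def lineal (hQ : IsClosedConvexCone Q) : Submodule ℝ E := hQ.toPointedCone.lineal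

lemma mem_lineal (hQ : IsClosedConvexCone Q) : x ∈ hQ.lineal ↔ x ∈ Q ∧ -x ∈ Q := Iff.rfl

lemma mem_of_forall_mem_dualCone [CompleteSpace E] (hQ : IsClosedConvexCone Q)
    (hx : ∀ p ∈ DualCone' Q, 0 ≤ ⟪p, x⟫) : x ∈ Q := by
  by_contra hxQ
  obtain ⟨p, hp, hpx⟩ := hQ.toProperCone.hyperplane_separation' (x₀ := x) hxQ
  exact (hx p fun q hq => real_inner_comm p q ▸ hp q hq).not_gt (real_inner_comm p x ▸ hpx)

lemma inter (hQ : IsClosedConvexCone Q) (hP : IsClosedConvexCone P) :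
    IsClosedConvexCone (Q ∩ P) where
  isClosed := hQ.isClosed.inter hP.isClosed
  convex := hQ.convex.inter hP.convex
  isCone c hc x hx := ⟨hQ.isCone c hc x hx.1, hP.isCone c hc x hx.2⟩
  zero_mem := ⟨hQ.zero_mem, hP.zero_mem⟩

end IsClosedConvexCone

lemma Convex.isClosedConvexCone_closure {S : Set E} (hconv : Convex ℝ S) (hcone : IsConeSet S)
    (h0 : (0 : E) ∈ S) :
    IsClosedConvexCone (closure S) where
  isClosed := isClosed_closure
  convex := hconv.closure
  isCone c hc _ hx := map_mem_closure (continuous_const_smul c) hx fun y hy => hcone c hc y hy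
  zero_mem := subset_closure h0

lemma Submodule.isClosedConvexCone [FiniteDimensional ℝ E] (L : Submodule ℝ E) :
    IsClosedConvexCone (L : Set E) where
  isClosed := L.closed_of_finiteDimensional
  convex := L.convex
  isCone c _ _ hx := L.smul_mem c hx
  zero_mem := L.zero_mem

lemma IsConeSet.zero_mem_of_isClosed {K : Set E} (hK : IsConeSet K) (hKc : IsClosed K)
    (hne : K.Nonempty) : (0 : E) ∈ K := by
  obtain ⟨y, hy⟩ := hne
  have hlim : Tendsto (fun c : ℝ => c • y) (𝓝[>] (0 : ℝ)) (𝓝 0) := by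
    have hcont : Continuous fun c : ℝ => c • y := continuous_id.smul continuous_const
    simpa using (hcont.tendsto 0).mono_left nhdsWithin_le_nhds
  exact hKc.mem_of_tendsto hlim (eventually_nhdsWithin_of_forall fun c hc => hK c hc y hy)

def feasibleDirections (x : E) (Q : Set E) : Set E := {d | ∃ ε : ℝ, 0 < ε ∧ x + ε • d ∈ Q}

namespace IsClosedConvexCone

variable {Q : Set E} {x : E}

lemma mem_feasibleDirections_iff (hQ : IsClosedConvexCone Q) (hx : x ∈ Q) {d : E} :
    d ∈ feasibleDirections x Q ↔ ∃ t : ℝ, 0 ≤ t ∧ d + t • x ∈ Q := by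
  constructor
  · rintro ⟨ε, hε, hmem⟩
    refine ⟨ε⁻¹, inv_nonneg.2 hε.le, ?_⟩
    convert hQ.smul_mem (inv_nonneg.2 hε.le) hmem using 1
    rw [smul_add, smul_smul, inv_mul_cancel₀ hε.ne', one_smul, add_comm]
  · rintro ⟨t, ht, hmem⟩
    have hε : 0 < (1 + t)⁻¹ := by positivity
    refine ⟨(1 + t)⁻¹, hε, ?_⟩
    convert hQ.add_mem (hQ.smul_mem hε.le hmem) (hQ.smul_mem hε.le hx) using 1
    have : (1 + t)⁻¹ * (1 + t) = 1 := inv_mul_cancel₀ (by positivity)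
    calc x + (1 + t)⁻¹ • d = ((1 + t)⁻¹ * (1 + t)) • x + (1 + t)⁻¹ • d := by rw [this, one_smul]
      _ = _ := by module

lemma convex_feasibleDirections (hQ : IsClosedConvexCone Q) (hx : x ∈ Q) :
    Convex ℝ (feasibleDirections x Q) := by
  intro d₁ hd₁ d₂ hd₂ a b ha hb hab
  obtain ⟨t₁, ht₁, h₁⟩ := (hQ.mem_feasibleDirections_iff hx).1 hd₁
  obtain ⟨t₂, ht₂, h₂⟩ := (hQ.mem_feasibleDirections_iff hx).1 hd₂
  refine (hQ.mem_feasibleDirections_iff hx).2 ⟨a * t₁ + b * t₂, by positivity, ?_⟩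
  convert hQ.convex h₁ h₂ ha hb hab using 1
  module

lemma tangCone (hQ : IsClosedConvexCone Q) (hx : x ∈ Q) : IsClosedConvexCone (TangCone x Q) := by
  refine Convex.isClosedConvexCone_closure (hQ.convex_feasibleDirections hx) ?_
    ⟨1, one_pos, by simpa using hx⟩
  rintro c hc d ⟨ε, hε, hmem⟩
  exact ⟨ε / c, by positivity, by rwa [smul_smul, div_mul_cancel₀ _ hc.ne']⟩

lemma subset_tangCone (hQ : IsClosedConvexCone Q) (hx : x ∈ Q) : Q ⊆ TangCone x Q :=
  fun d hd => subset_closure ((hQ.mem_feasibleDirections_iff hx).2 ⟨0, le_rfl, by simpa using hd⟩)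

lemma neg_mem_tangCone (hQ : IsClosedConvexCone Q) (hx : x ∈ Q) : -x ∈ TangCone x Q :=
  subset_closure ((hQ.mem_feasibleDirections_iff hx).2 ⟨1, zero_le_one, by simpa using hQ.zero_mem⟩)

end IsClosedConvexCone

lemma StronglyTangentiallyExposed.tangCone {Q : Set E} (hQ : StronglyTangentiallyExposed Q)
    {x : E} (hx : x ∈ Q) : StronglyTangentiallyExposed (TangCone x Q) := by
  have hiter : ∀ k, TangIter (TangCone x Q) k ⊆ TangIter Q (k + 1) := by
    intro k
    induction k with
    | zero => rintro T rfl; exact ⟨Q, rfl, x, hx, rfl⟩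
    | succ k ih => rintro T ⟨C, hC, y, hy, rfl⟩; exact ⟨C, ih hC, y, hy, rfl⟩
  exact fun k T hT => hQ (k + 1) T (hiter k hT)

lemma isClosedConvexCone_dualCone (S : Set E) : IsClosedConvexCone (DualCone' S) where
  isClosed := by
    rw [show DualCone' S = ⋂ x ∈ S, {s | 0 ≤ ⟪s, x⟫} by ext; simp [DualCone']]
    exact isClosed_biInter fun x _ =>
      isClosed_le continuous_const (continuous_id.inner continuous_const)
  convex _ hu _ hv a b ha hb _ x hx := by
    rw [inner_add_left, real_inner_smul_left, real_inner_smul_left]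
    have := hu x hx
    have := hv x hx
    positivity
  isCone c hc _ hs x hx := by
    rw [real_inner_smul_left]
    exact mul_nonneg hc.le (hs x hx)
  zero_mem x _ := by simp

lemma dualCone_anti {S T : Set E} (h : S ⊆ T) : DualCone' T ⊆ DualCone' S :=
  fun _ hs x hx => hs x (h hx)

lemma perpOf_eq_orthogonal_span (F : Set E) : PerpOf F = ((Submodule.span ℝ F)ᗮ : Set E) := by
  ext v
  rw [SetLike.mem_coe, Submodule.mem_orthogonal']
  refine ⟨fun h u hu => ?_, fun h u hu => h u (Submodule.subset_span hu)⟩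
  exact Submodule.span_le (p := LinearMap.ker (innerₛₗ ℝ v)).2 h hu

lemma isClosedConvexCone_dualCone_add_orthogonal (S : Set E) (L : Submodule ℝ E) :
    IsClosedConvexCone (closure (DualCone' S + (Lᗮ : Set E))) := by
  have hS := isClosedConvexCone_dualCone S
  refine Convex.isClosedConvexCone_closure (hS.convex.add Lᗮ.convex) ?_
    ⟨0, hS.zero_mem, 0, Lᗮ.zero_mem, add_zero 0⟩
  rintro c hc _ ⟨u, hu, v, hv, rfl⟩
  exact ⟨c • u, hS.isCone c hc u hu, c • v, Lᗮ.smul_mem c hv, (smul_add c u v).symm⟩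

/-- The bipolar theorem in the form `(Q ∩ L)* = closure (Q* + L^⊥)`. -/
lemma IsClosedConvexCone.mem_closure_dualCone_add_orthogonal [FiniteDimensional ℝ E] {Q : Set E}
    (hQ : IsClosedConvexCone Q) {L : Submodule ℝ E} {s : E}
    (hs : s ∈ DualCone' (Q ∩ (L : Set E))) : s ∈ closure (DualCone' Q + (Lᗮ : Set E)) := by
  refine (isClosedConvexCone_dualCone_add_orthogonal Q L).mem_of_forall_mem_dualCone
    fun p hp => ?_
  have hpQ : p ∈ Q := hQ.mem_of_forall_mem_dualCone fun q hq =>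
    real_inner_comm p q ▸ hp q (subset_closure ⟨q, hq, 0, Lᗮ.zero_mem, add_zero q⟩)
  have hpL : p ∈ L := by
    rw [← L.orthogonal_orthogonal, Submodule.mem_orthogonal']
    intro y hy
    have hmem : ∀ z ∈ Lᗮ, 0 ≤ ⟪p, z⟫ := fun z hz =>
      hp z (subset_closure ⟨0, (isClosedConvexCone_dualCone Q).zero_mem, z, hz, zero_add z⟩)
    have := hmem (-y) (Lᗮ.neg_mem hy)
    rw [inner_neg_right] at this
    exact le_antisymm (by linarith) (hmem y hy)
  rw [real_inner_comm]
  exact hs p ⟨hpQ, hpL⟩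

section Faces

variable {C Q F : Set E}

lemma isFaceOf_self (hconv : Convex ℝ C) (hclosed : IsClosed C) : IsFaceOf C C :=
  ⟨subset_rfl, hconv, hclosed, fun _ _ _ hy _ hz _ => ⟨hy, hz⟩⟩

lemma IsFaceOf.trans (hFQ : IsFaceOf F Q) (hQC : IsFaceOf Q C) : IsFaceOf F C := by
  refine ⟨hFQ.1.trans hQC.1, hFQ.2.1, hFQ.2.2.1, fun x hx y hy z hz hxyz => ?_⟩
  obtain ⟨hyQ, hzQ⟩ := hQC.2.2.2 x (hFQ.1 hx) y hy z hz hxyz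
  exact hFQ.2.2.2 x hx y hyQ z hzQ hxyz

lemma IsClosedConvexCone.isFaceOf_inter_ker (hQ : IsClosedConvexCone Q)
    (f : StrongDual ℝ E) (hf : ∀ q ∈ Q, f q ≤ 0) :
    IsFaceOf (Q ∩ (LinearMap.ker (f : E →ₗ[ℝ] ℝ) : Set E)) Q := by
  refine ⟨inter_subset_left, hQ.convex.inter (LinearMap.ker _).convex,
    hQ.isClosed.inter (isClosed_singleton.preimage f.continuous), ?_⟩
  rintro x ⟨-, hx⟩ y hy z hz ⟨a, b, ha, hb, -, rfl⟩
  simp only [SetLike.mem_coe, LinearMap.mem_ker, ContinuousLinearMap.coe_coe, map_add,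
    map_smul, smul_eq_mul] at hx ⊢
  have hay := mul_nonpos_of_nonneg_of_nonpos ha.le (hf y hy)
  have hbz := mul_nonpos_of_nonneg_of_nonpos hb.le (hf z hz)
  exact ⟨⟨hy, (mul_eq_zero.1 (by linarith : a * f y = 0)).resolve_left ha.ne'⟩,
    ⟨hz, (mul_eq_zero.1 (by linarith : b * f z = 0)).resolve_left hb.ne'⟩⟩

lemma mem_openSegment_smul_smul (y : E) {a b : ℝ} (ha : a < 1) (hb : 1 < b) :
    y ∈ openSegment ℝ (a • y) (b • y) := by
  have h := image_openSegment ℝ (LinearMap.toSpanSingleton ℝ E y).toAffineMap a b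
  simp only [LinearMap.coe_toAffineMap, LinearMap.toSpanSingleton_apply] at h
  rw [← h, openSegment_eq_Ioo (ha.trans hb)]
  exact ⟨1, ⟨ha, hb⟩, one_smul ℝ y⟩

lemma IsClosedConvexCone.of_isFaceOf (hQ : IsClosedConvexCone Q) (hF : IsFaceOf F Q)
    (hFne : F.Nonempty) : IsClosedConvexCone F := by
  have hray : ∀ y ∈ F, ∀ {a b : ℝ}, 0 ≤ a → a < 1 → 1 < b → a • y ∈ F ∧ b • y ∈ F :=
    fun y hy a b ha0 ha hb => hF.2.2.2 y hy _ (hQ.smul_mem ha0 (hF.1 hy)) _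
      (hQ.smul_mem (by linarith) (hF.1 hy)) (mem_openSegment_smul_smul y ha hb)
  refine ⟨hF.2.2.1, hF.2.1, fun c hc y hy => ?_, ?_⟩
  · rcases lt_trichotomy c 1 with hc1 | rfl | hc1
    · exact (hray y hy hc.le hc1 one_lt_two).1
    · rwa [one_smul]
    · exact (hray y hy le_rfl zero_lt_one hc1).2
  · obtain ⟨y, hy⟩ := hFne
    simpa using (hray y hy le_rfl zero_lt_one one_lt_two).1

lemma TangentiallyExposed.inter_span_eq_of_isFaceOf (hC : TangentiallyExposed C)
    (hQC : IsFaceOf Q C) (hFQ : IsFaceOf F Q) (hFne : F.Nonempty) (hFQne : F ≠ Q) {x : E}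
    (hx : x ∈ F) :
    TangCone x Q ∩ (Submodule.span ℝ F : Set E) = TangCone x F := by
  have hFC : IsProperFaceOf F C := ⟨hFQ.trans hQC, hFne, fun h =>
    hFQne (hFQ.1.antisymm (h ▸ hQC.1))⟩
  by_cases hQC' : Q = C
  · subst hQC'
    exact hC F hFC x hx
  rw [← hC F hFC x hx, ← hC Q ⟨hQC, hFne.mono hFQ.1, hQC'⟩ x (hFQ.1 hx), inter_assoc,
    inter_eq_right.2 (Submodule.span_mono hFQ.1)]

end Faces

lemma Convex.interior_closure_subset [FiniteDimensional ℝ E] {A : Set E} (hA : Convex ℝ A) :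
    interior (closure A) ⊆ A := by
  intro x hx
  have hint : (interior A).Nonempty := by
    rw [hA.interior_nonempty_iff_affineSpan_eq_top, eq_top_iff,
      ← hA.closure.interior_nonempty_iff_affineSpan_eq_top.1 ⟨x, hx⟩]
    exact affineSpan_le.2 (closure_minimal (subset_affineSpan ℝ A)
      (affineSpan ℝ A).closed_of_finiteDimensional)
  rw [hA.interior_closure_eq_interior_of_nonempty_interior hint] at hx
  exact interior_subset hx

lemma affineSpan_eq_top_of_zero_mem {A : Set E} (h0 : (0 : E) ∈ A)
    (hA : Submodule.span ℝ A = ⊤) : affineSpan ℝ A = ⊤ := by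
  rw [AffineSubspace.affineSpan_eq_top_iff_vectorSpan_eq_top_of_nonempty ℝ E E ⟨0, h0⟩,
    vectorSpan_eq_span_vsub_set_right ℝ h0]
  simpa using hA

lemma mem_openSegment_add_smul_sub {q z : E} {δ : ℝ} (hδ : 0 < δ) :
    z ∈ openSegment ℝ q (z + δ • (z - q)) := by
  refine ⟨δ / (1 + δ), 1 / (1 + δ), by positivity, by positivity, by field_simp; ring, ?_⟩
  match_scalars
  · ring
  · field_simp

lemma PointedCone.exists_forall_add_smul_mem [FiniteDimensional ℝ E] (C : PointedCone ℝ E) :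
    ∃ z ∈ C, ∀ w ∈ Submodule.span ℝ (C : Set E), ∃ δ : ℝ, 0 < δ ∧ z + δ • w ∈ C := by
  classical
  obtain ⟨S, hSC, hS⟩ : ∃ S : Finset E, (∀ a ∈ S, a ∈ C) ∧
      Submodule.span ℝ (S : Set E) = Submodule.span ℝ (C : Set E) := by
    obtain ⟨b, hbC, hbspan, hbind⟩ := exists_linearIndependent ℝ (C : Set E)
    exact ⟨hbind.setFinite.toFinset, fun a ha => hbC (by simpa using ha), by simpa using hbspan⟩
  refine ⟨∑ a ∈ S, a, C.sum_mem hSC, fun w hw => ?_⟩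
  rw [← hS, Submodule.mem_span_finset] at hw
  obtain ⟨g, -, rfl⟩ := hw
  set B := ∑ a ∈ S, |g a|
  have hB : 0 ≤ B := Finset.sum_nonneg fun a _ => abs_nonneg (g a)
  refine ⟨(1 + B)⁻¹, by positivity, ?_⟩
  -- `δ = (1 + B)⁻¹` keeps every coefficient `1 + δ * g a` of `z + δ • w` nonnegative
  have hcoef : ∀ a ∈ S, 0 ≤ 1 + (1 + B)⁻¹ * g a := by
    intro a ha
    have h1 : |g a| ≤ B := Finset.single_le_sum (fun a _ => abs_nonneg (g a)) ha
    have h2 : |(1 + B)⁻¹ * g a| ≤ 1 := by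
      rw [abs_mul, abs_of_pos (by positivity), inv_mul_le_one₀ (by positivity)]
      linarith
    linarith [neg_abs_le ((1 + B)⁻¹ * g a)]
  convert C.sum_mem fun a ha => C.smul_mem (hcoef a ha) (hSC a ha) using 1
  simp only [add_smul, one_smul, Finset.sum_add_distrib, Finset.smul_sum, smul_smul]

lemma IsClosedConvexCone.inter_span_eq_of_isFaceOf [FiniteDimensional ℝ E] {K F : Set E}
    (hK : IsClosedConvexCone K) (hF : IsFaceOf F K) (hFne : F.Nonempty) :
    K ∩ (Submodule.span ℝ F : Set E) = F := by
  refine Subset.antisymm (fun q ⟨hqK, hqF⟩ => ?_) fun f hf => ⟨hF.1 hf, Submodule.subset_span hf⟩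
  obtain ⟨z, hzF, hz⟩ := (hK.of_isFaceOf hF hFne).toPointedCone.exists_forall_add_smul_mem
  obtain ⟨δ, hδ, hmem⟩ := hz (z - q) (Submodule.sub_mem _ (Submodule.subset_span hzF) hqF)
  exact (hF.2.2.2 z hzF q hqK _ (hF.1 hmem) (mem_openSegment_add_smul_sub hδ)).1

lemma PointedCone.exists_ball_or_exists_supporting [FiniteDimensional ℝ E] (C : PointedCone ℝ E)
    {z : E} (hz : z ∈ C) :
    (∃ r > 0, ∀ w ∈ Submodule.span ℝ (C : Set E), ‖w‖ < r → z + w ∈ C) ∨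
      ∃ f : StrongDual ℝ E, (∀ q ∈ C, f q ≤ 0) ∧ f z = 0 ∧ ∃ q ∈ C, f q < 0 := by
  set W := Submodule.span ℝ (C : Set E)
  -- thickening `C` by `Wᗮ` turns its relative interior into an interior
  set A : Set E := (C : Set E) + (Wᗮ : Set E)
  have hA : Convex ℝ A := C.convex.add Wᗮ.convex
  have hCA : (C : Set E) ⊆ A := fun q hq => ⟨q, hq, 0, Wᗮ.zero_mem, add_zero q⟩
  have hWA : (Wᗮ : Set E) ⊆ A := fun y hy => ⟨0, C.zero_mem, y, hy, zero_add y⟩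
  by_cases hzA : z ∈ interior A
  · left
    obtain ⟨r, hr, hball⟩ := Metric.isOpen_iff.1 isOpen_interior z hzA
    refine ⟨r, hr, fun w hw hwr => ?_⟩
    obtain ⟨q, hq, y, hy, hqy⟩ :=
      Set.mem_add.1 (interior_subset (hball (show z + w ∈ Metric.ball z r by simpa using hwr)))
    have hyW : y ∈ W := by
      rw [eq_sub_of_add_eq' hqy]
      exact W.sub_mem (W.add_mem (Submodule.subset_span hz) hw) (Submodule.subset_span hq)
    rw [← hqy, inner_self_eq_zero.1 (Submodule.inner_left_of_mem_orthogonal hyW hy), add_zero]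
    exact hq
  right
  have hint : (interior A).Nonempty := by
    refine hA.interior_nonempty_iff_affineSpan_eq_top.2
      (affineSpan_eq_top_of_zero_mem (hCA C.zero_mem) (eq_top_iff.2 ?_))
    rw [← W.sup_orthogonal_of_hasOrthogonalProjection]
    exact sup_le (Submodule.span_mono hCA) (hWA.trans Submodule.subset_span)
  obtain ⟨f, hf⟩ := geometric_hahn_banach_open_point hA.interior isOpen_interior hzA
  have hfA : ∀ a ∈ A, f a ≤ f z := by
    intro a ha
    have ha' : a ∈ closure (interior A) := by
      rw [hA.closure_interior_eq_closure_of_nonempty_interior hint]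
      exact subset_closure ha
    exact closure_minimal (fun b hb => (hf b hb).le)
      (isClosed_le f.continuous continuous_const) ha'
  have hfz : f z = 0 := by
    have h0 := hfA 0 (hCA C.zero_mem)
    have h2 := hfA ((2 : ℝ) • z) (hCA (C.smul_mem zero_le_two hz))
    simp only [map_zero, map_smul, smul_eq_mul] at h0 h2
    linarith
  have hfW : ∀ y ∈ Wᗮ, f y = 0 := by
    intro y hy
    have h1 := hfA y (hWA hy)
    have h2 := hfA (-y) (hWA (Wᗮ.neg_mem hy))
    rw [map_neg] at h2
    linarith
  obtain ⟨z₀, hz₀⟩ := hint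
  obtain ⟨q, hq, y, hy, rfl⟩ := interior_subset hz₀
  refine ⟨f, fun q hq => hfz ▸ hfA q (hCA hq), hfz, q, hq, ?_⟩
  have := hf _ hz₀
  rw [map_add, hfW y hy, hfz] at this
  linarith

lemma Convex.combo_mem_of_forall_add_mem [FiniteDimensional ℝ E] {S : Set E} {W : Submodule ℝ E}
    (hS : Convex ℝ S) (hSW : S ⊆ W) {p u : E} {r : ℝ} (hr : 0 < r)
    (hp : ∀ w ∈ W, ‖w‖ < r → p + w ∈ S) (hu : u ∈ closure S) {θ : ℝ} (hθ : 0 < θ)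
    (hθ1 : θ ≤ 1) : θ • p + (1 - θ) • u ∈ S := by
  obtain ⟨u', hu'S, hdist⟩ := Metric.mem_closure_iff.1 hu (θ * r) (by positivity)
  have huW : u ∈ W := closure_minimal hSW W.closed_of_finiteDimensional hu
  have hw : (θ⁻¹ * (1 - θ)) • (u - u') ∈ W := W.smul_mem _ (W.sub_mem huW (hSW hu'S))
  have hwr : ‖(θ⁻¹ * (1 - θ)) • (u - u')‖ < r := by
    rw [norm_smul, Real.norm_of_nonneg (mul_nonneg (inv_nonneg.2 hθ.le) (sub_nonneg.2 hθ1)),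
      ← dist_eq_norm]
    have hcoef : θ⁻¹ * (1 - θ) ≤ θ⁻¹ := mul_le_of_le_one_right (inv_nonneg.2 hθ.le) (by linarith)
    calc θ⁻¹ * (1 - θ) * dist u u' ≤ θ⁻¹ * dist u u' := by gcongr
      _ < θ⁻¹ * (θ * r) := by gcongr
      _ = r := inv_mul_cancel_left₀ hθ.ne' r
  convert hS (hp _ hw hwr) hu'S hθ.le (sub_nonneg.2 hθ1) (add_sub_cancel θ 1) using 1
  rw [smul_add, smul_smul, mul_inv_cancel_left₀ hθ.ne']
  module

lemma IsClosedConvexCone.mem_dualCone_tangCone_inter_of_ball [FiniteDimensional ℝ E] {Q : Set E}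
    (hQ : IsClosedConvexCone Q) {L : Submodule ℝ E} {s x z : E}
    (hs : s ∈ DualCone' (Q ∩ (L : Set E))) (hx : x ∈ Q ∩ (L : Set E)) (hsx : ⟪s, x⟫ = 0)
    (hz : z ∈ L) {r : ℝ} (hr : 0 < r)
    (hball : ∀ w ∈ Submodule.span ℝ Q, ‖w‖ < r → z + w ∈ Q) :
    s ∈ DualCone' (TangCone x Q ∩ (L : Set E)) := by
  set W := Submodule.span ℝ Q
  have hfeas : ∀ {d}, d ∈ feasibleDirections x Q ↔ ∃ t : ℝ, 0 ≤ t ∧ d + t • x ∈ Q :=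
    hQ.mem_feasibleDirections_iff hx.1
  have hSW : feasibleDirections x Q ⊆ W := by
    intro d hd
    obtain ⟨t, -, hdt⟩ := hfeas.1 hd
    simpa using W.sub_mem (Submodule.subset_span hdt) (W.smul_mem t (Submodule.subset_span hx.1))
  have hp : ∀ w ∈ W, ‖w‖ < r → z - x + w ∈ feasibleDirections x Q := fun w hw hwr =>
    hfeas.2 ⟨1, zero_le_one, by simpa [sub_add_eq_add_sub] using hball w hw hwr⟩
  have hnonneg : ∀ v ∈ feasibleDirections x Q, v ∈ L → 0 ≤ ⟪s, v⟫ := by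
    intro v hv hvL
    obtain ⟨t, -, hvt⟩ := hfeas.1 hv
    have := hs _ ⟨hvt, L.add_mem hvL (L.smul_mem t hx.2)⟩
    rwa [inner_add_right, real_inner_smul_right, hsx, mul_zero, add_zero] at this
  rintro u ⟨hu, huL⟩
  have hlim : Tendsto (fun θ : ℝ => θ • (z - x) + (1 - θ) • u) (𝓝[>] 0) (𝓝 u) := by
    have hcont : Continuous fun θ : ℝ => θ • (z - x) + (1 - θ) • u := by fun_prop
    simpa using (hcont.tendsto 0).mono_left nhdsWithin_le_nhds
  have hclosed : IsClosed {v : E | 0 ≤ ⟪s, v⟫} :=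
    isClosed_le continuous_const (continuous_const.inner continuous_id)
  refine hclosed.mem_of_tendsto hlim ?_
  filter_upwards [Ioc_mem_nhdsGT zero_lt_one] with θ hθ
  exact hnonneg _ ((hQ.convex_feasibleDirections hx.1).combo_mem_of_forall_add_mem hSW hr hp hu
    hθ.1 hθ.2) (L.add_mem (L.smul_mem θ (L.sub_mem hz hx.2)) (L.smul_mem _ huL))

theorem TangentiallyExposed.mem_dualCone_tangCone_inter [FiniteDimensional ℝ E] {C Q : Set E}
    (hC : TangentiallyExposed C) (hQC : IsFaceOf Q C) (hQ : IsClosedConvexCone Q)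
    {L : Submodule ℝ E} (hL : Submodule.span ℝ (Q ∩ (L : Set E)) = L) {s x : E}
    (hs : s ∈ DualCone' (Q ∩ (L : Set E))) (hx : x ∈ Q ∩ (L : Set E)) (hsx : ⟪s, x⟫ = 0) :
    s ∈ DualCone' (TangCone x Q ∩ (L : Set E)) := by
  obtain ⟨z, hzD, hz⟩ := (hQ.inter L.isClosedConvexCone).toPointedCone.exists_forall_add_smul_mem
  rcases hQ.toPointedCone.exists_ball_or_exists_supporting hzD.1 with
    ⟨r, hr, hball⟩ | ⟨f, hfQ, hfz, q, hq, hfq⟩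
  · exact hQ.mem_dualCone_tangCone_inter_of_ball hs hx hsx hzD.2 hr hball
  -- otherwise pass to the proper face of `Q` exposed by `f`, which contains `Q ∩ L`
  set F := Q ∩ (LinearMap.ker (f : E →ₗ[ℝ] ℝ) : Set E)
  have hFQ : IsFaceOf F Q := hQ.isFaceOf_inter_ker f hfQ
  have hF : IsClosedConvexCone F := hQ.inter (LinearMap.ker (f : E →ₗ[ℝ] ℝ)).isClosedConvexCone
  have hDF : Q ∩ (L : Set E) ⊆ F := by
    intro d hd
    obtain ⟨δ, hδ, hmem⟩ := hz (z - d) (Submodule.sub_mem _ (Submodule.subset_span hzD)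
      (Submodule.subset_span hd))
    have h1 := hfQ _ hmem.1
    have h2 := hfQ d hd.1
    simp only [map_add, map_smul, map_sub, hfz, smul_eq_mul] at h1
    refine ⟨hd.1, show f d = 0 from le_antisymm h2 ?_⟩
    nlinarith
  have hFL : F ∩ (L : Set E) = Q ∩ (L : Set E) :=
    (inter_subset_inter_left _ inter_subset_left).antisymm fun d hd => ⟨hDF hd, hd.2⟩
  have hfq' : q ∉ F := fun h => hfq.ne h.2
  have hrank : Module.finrank ℝ (Submodule.span ℝ F) < Module.finrank ℝ (Submodule.span ℝ Q) := by
    refine Submodule.finrank_lt_finrank_of_lt (lt_of_le_of_ne (Submodule.span_mono hFQ.1) ?_)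
    intro h
    have hqF : q ∈ Submodule.span ℝ F := h ▸ Submodule.subset_span hq
    exact hfq.ne (Submodule.span_le.2 inter_subset_right hqF)
  have htan := hC.inter_span_eq_of_isFaceOf hQC hFQ ⟨z, hDF hzD⟩ (fun h => hfq' (h ▸ hq)) (hDF hx)
  have hLF : (L : Set E) ⊆ Submodule.span ℝ F := by
    rw [← hL]
    exact Submodule.span_le.2 (hDF.trans Submodule.subset_span)
  have hsF := hC.mem_dualCone_tangCone_inter (hFQ.trans hQC) hF (hFL ▸ hL) (hFL ▸ hs)
    (hFL ▸ hx) hsx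
  have hsub : TangCone x Q ∩ (L : Set E) ⊆ TangCone x F ∩ (L : Set E) := fun u hu =>
    ⟨htan ▸ ⟨hu.1, hLF hu.2⟩, hu.2⟩
  exact dualCone_anti hsub hsF
termination_by Module.finrank ℝ (Submodule.span ℝ Q)

section Lineality

variable [FiniteDimensional ℝ E] {D : Set E}

lemma IsClosedConvexCone.exists_pos_mul_norm_le_inner (hD : IsClosedConvexCone D) {s : E}
    (hs : s ∈ DualCone' D) (hlin : ∀ d ∈ D, ⟪s, d⟫ = 0 → -d ∈ D) :
    ∃ c > 0, ∀ d ∈ D, d ∈ hD.linealᗮ → c * ‖d‖ ≤ ⟪s, d⟫ := by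
  set T := (D ∩ (hD.linealᗮ : Set E)) ∩ Metric.sphere 0 1
  have hT : IsCompact T :=
    (isCompact_sphere 0 1).inter_left (hD.isClosed.inter hD.linealᗮ.closed_of_finiteDimensional)
  have hpos : ∀ d ∈ T, 0 < ⟪s, d⟫ := by
    rintro d ⟨⟨hdD, hdM⟩, hd1⟩
    refine (hs d hdD).lt_of_ne fun h => ?_
    have hd0 := inner_self_eq_zero.1
      (Submodule.inner_left_of_mem_orthogonal (hD.mem_lineal.2 ⟨hdD, hlin d hdD h.symm⟩) hdM)
    simp [hd0] at hd1
  obtain ⟨c, hc, hcT⟩ :=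
    hT.exists_forall_le' (continuous_const.inner continuous_id).continuousOn hpos
  refine ⟨c, hc, fun d hdD hdM => ?_⟩
  rcases eq_or_ne d 0 with rfl | hd0
  · simp
  have hn : 0 < ‖d‖ := norm_pos_iff.2 hd0
  have hcd := hcT (‖d‖⁻¹ • d) ⟨⟨hD.smul_mem (by positivity) hdD, hD.linealᗮ.smul_mem _ hdM⟩,
    by simp [norm_smul, hn.ne']⟩
  rw [id, real_inner_smul_right] at hcd
  calc c * ‖d‖ ≤ ‖d‖⁻¹ * ⟪s, d⟫ * ‖d‖ := by gcongr
    _ = ⟪s, d⟫ := by field_simp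

lemma IsClosedConvexCone.add_mem_dualCone (hD : IsClosedConvexCone D) {s t : E} {c : ℝ}
    (hs : s ∈ DualCone' D) (hcs : ∀ d ∈ D, d ∈ hD.linealᗮ → c * ‖d‖ ≤ ⟪s, d⟫)
    (ht : t ∈ hD.linealᗮ) (htc : ‖t‖ ≤ c) : s + t ∈ DualCone' D := by
  intro d hd
  obtain ⟨dM, hdM, dP, hdP, rfl⟩ := hD.lineal.exists_add_mem_mem_orthogonal d
  have hdPD : dP ∈ D := by simpa using hD.add_mem hd hdM.2
  have hsdM : ⟪s, dM⟫ = 0 :=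
    le_antisymm (by simpa [inner_neg_right] using hs _ hdM.2) (hs dM hdM.1)
  have htdP : -(‖t‖ * ‖dP‖) ≤ ⟪t, dP⟫ := neg_le_of_abs_le (abs_real_inner_le_norm t dP)
  have := hcs dP hdPD hdP
  rw [inner_add_left, inner_add_right, inner_add_right, hsdM,
    Submodule.inner_left_of_mem_orthogonal hdM ht]
  nlinarith [norm_nonneg dP]

/-- `s` lies in the relative interior of `(Q ∩ L)* = closure (Q* + L^⊥)`, hence in `Q* + L^⊥`. -/
lemma IsClosedConvexCone.mem_dualCone_add_orthogonal_of_forall_neg_mem {Q : Set E}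
    (hQ : IsClosedConvexCone Q) {L : Submodule ℝ E} {s : E}
    (hs : s ∈ DualCone' (Q ∩ (L : Set E)))
    (hlin : ∀ d ∈ Q ∩ (L : Set E), ⟪s, d⟫ = 0 → -d ∈ Q) :
    s ∈ DualCone' Q + (Lᗮ : Set E) := by
  have hD := hQ.inter L.isClosedConvexCone
  set M := hD.lineal
  obtain ⟨c, hc, hcs⟩ :=
    hD.exists_pos_mul_norm_le_inner hs fun d hd h => ⟨hlin d hd h, L.neg_mem hd.2⟩
  -- adding `M` makes the sum full-dimensional around `s`
  have hball : Metric.ball s c ⊆ closure (DualCone' Q + (Lᗮ : Set E) + (M : Set E)) := by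
    intro y hy
    obtain ⟨tM, htM, tP, htP, hyt⟩ := M.exists_add_mem_mem_orthogonal (y - s)
    have hnorm : ‖tP‖ ≤ c := by
      have h := norm_add_sq_eq_norm_sq_add_norm_sq_of_inner_eq_zero (𝕜 := ℝ) tM tP
        (Submodule.inner_right_of_mem_orthogonal htM htP)
      rw [← hyt, ← dist_eq_norm] at h
      nlinarith [Metric.mem_ball.1 hy, dist_nonneg (x := y) (y := s), mul_self_nonneg ‖tM‖]
    have hsP := hQ.mem_closure_dualCone_add_orthogonal (hD.add_mem_dualCone hs hcs htP hnorm)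
    rw [show y = s + tP + tM by rw [add_assoc, add_comm tP, ← hyt]; abel]
    exact map_mem_closure (f := (· + tM)) (continuous_add_const tM) hsP
      fun a ha => Set.add_mem_add ha htM
  have hconv : Convex ℝ (DualCone' Q + (Lᗮ : Set E) + (M : Set E)) :=
    ((isClosedConvexCone_dualCone Q).convex.add Lᗮ.convex).add M.convex
  obtain ⟨_, ⟨u, hu, v, hv, rfl⟩, m, hm, hsum⟩ := hconv.interior_closure_subset
    (mem_interior.2 ⟨_, hball, Metric.isOpen_ball, Metric.mem_ball_self hc⟩)
  have hm0 : m = 0 := by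
    have hsm : ⟪s, m⟫ = 0 :=
      le_antisymm (by simpa [inner_neg_right] using hs _ hm.2) (hs m hm.1)
    have hum : ⟪u, m⟫ = 0 :=
      le_antisymm (by simpa [inner_neg_right] using hu _ hm.2.1) (hu m hm.1.1)
    have hvm : ⟪v, m⟫ = 0 := Submodule.inner_left_of_mem_orthogonal hm.1.2 hv
    rw [← hsum, inner_add_left, inner_add_left, hum, hvm, zero_add, zero_add] at hsm
    exact inner_self_eq_zero.1 hsm
  exact ⟨u, hu, v, hv, by simpa [hm0] using hsum⟩

end Lineality

theorem StronglyTangentiallyExposed.mem_dualCone_add_orthogonal [FiniteDimensional ℝ E]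
    {Q : Set E} (hste : StronglyTangentiallyExposed Q) (hQ : IsClosedConvexCone Q)
    {L : Submodule ℝ E} (hL : Submodule.span ℝ (Q ∩ (L : Set E)) = L) {s : E}
    (hs : s ∈ DualCone' (Q ∩ (L : Set E))) : s ∈ DualCone' Q + (Lᗮ : Set E) := by
  by_cases hlin : ∀ d ∈ Q ∩ (L : Set E), ⟪s, d⟫ = 0 → -d ∈ Q
  · exact hQ.mem_dualCone_add_orthogonal_of_forall_neg_mem hs hlin
  push Not at hlin
  obtain ⟨x, hx, hsx, hnx⟩ := hlin
  -- pass to `T(x; Q)`, whose lineality space contains `x` in addition to that of `Q`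
  have hT := hQ.tangCone hx.1
  have hQT := hQ.subset_tangCone hx.1
  have hLT : Submodule.span ℝ (TangCone x Q ∩ (L : Set E)) = L :=
    le_antisymm (Submodule.span_le.2 inter_subset_right)
      (hL.symm.le.trans (Submodule.span_mono (inter_subset_inter_left _ hQT)))
  have hsT := (hste 0 Q rfl).mem_dualCone_tangCone_inter (isFaceOf_self hQ.convex hQ.isClosed)
    hQ hL hs hx hsx
  have hlt : hQ.lineal < hT.lineal := by
    refine lt_of_le_of_ne (fun v hv => ⟨hQT hv.1, hQT hv.2⟩) fun h => hnx ?_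
    have hxT : x ∈ hT.lineal := ⟨hQT hx.1, hQ.neg_mem_tangCone hx.1⟩
    exact (hQ.mem_lineal.1 (h ▸ hxT)).2
  obtain ⟨u, hu, v, hv, rfl⟩ := (hste.tangCone hx.1).mem_dualCone_add_orthogonal hT hLT hsT
  exact ⟨u, dualCone_anti hQT hu, v, hv, rfl⟩
termination_by Module.finrank ℝ E - Module.finrank ℝ hQ.lineal
decreasing_by
  have := Submodule.finrank_lt_finrank_of_lt hlt
  have := Submodule.finrank_le hT.lineal
  omega

/-- **Theorem (sufficient condition).** A strongly tangentially exposed closed convex cone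
in a finite-dimensional Euclidean space is facially dual complete. -/
theorem strongly_tangentially_exposed_implies_FDC
    {E : Type*} [NormedAddCommGroup E] [InnerProductSpace ℝ E] [FiniteDimensional ℝ E]
    (K : Set E) (hKclosed : IsClosed K) (hKconv : Convex ℝ K) (hKcone : IsConeSet K)
    (hste : StronglyTangentiallyExposed K) :
    IsFDC K := by
  rintro F ⟨hFK, hFne, -⟩
  have hK : IsClosedConvexCone K :=
    ⟨hKclosed, hKconv, hKcone, hKcone.zero_mem_of_isClosed hKclosed (hFne.mono hFK.1)⟩
  have hKF := hK.inter_span_eq_of_isFaceOf hFK hFne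
  suffices DualCone' K + PerpOf F = DualCone' F from this ▸ (isClosedConvexCone_dualCone F).isClosed
  refine Subset.antisymm ?_ fun s hs => ?_
  · rintro _ ⟨u, hu, v, hv, rfl⟩ f hf
    rw [inner_add_left, hv f hf, add_zero]
    exact hu f (hFK.1 hf)
  rw [perpOf_eq_orthogonal_span]
  exact hste.mem_dualCone_add_orthogonal hK (by rw [hKF]) (by rwa [hKF])
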